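/- Let A : X ⇉ X* be a maximal monotone linear relation that is Borwein–Wiersma decomposable. Then dom A ⊆ dom A*. -/

import Mathlib

open Pointwise
open scoped Classical

noncomputable section

abbrev Dl (X : Type*) [NormedAddCommGroup X] [NormedSpace ℝ X] : Type _ :=
  StrongDual ℝ X

variable {X : Type*} [NormedAddCommGroup X] [NormedSpace ℝ X]

/-- The graph of a set-valued operator. -/
def graphOf (A : X → Set (Dl X)) : Set (X × Dl X) := {p | p.2 ∈ A p.1}

/-- The domain of a set-valued operator. -/
def domOf (A : X → Set (Dl X)) : Set X := {x | (A x).Nonempty}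

/-- Monotone set-valued operator. -/
def MonotoneOp (A : X → Set (Dl X)) : Prop :=
  ∀ ⦃x xs y ys⦄, xs ∈ A x → ys ∈ A y → 0 ≤ (xs - ys) (x - y)

/-- Maximal monotone set-valued operator. -/
def MaxMonotoneOp (A : X → Set (Dl X)) : Prop :=
  MonotoneOp A ∧ ∀ x xs, (∀ y ys, ys ∈ A y → 0 ≤ (xs - ys) (x - y)) → xs ∈ A x

/-- `A` is a linear relation: its graph is a linear subspace of `X × X*`. -/
def IsLinearRelation (A : X → Set (Dl X)) : Prop :=
  (0 : Dl X) ∈ A 0 ∧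
  (∀ x xs y ys, xs ∈ A x → ys ∈ A y → xs + ys ∈ A (x + y)) ∧
  (∀ (c : ℝ) x xs, xs ∈ A x → c • xs ∈ A (c • x))

/-- The adjoint of a linear relation. -/
def adjointRel (A : X → Set (Dl X)) : X → Set (Dl X) :=
  fun x => {xs | ∀ a as, as ∈ A a → xs a = as x}

/-- Skew linear relation. -/
def SkewOp (A : X → Set (Dl X)) : Prop := ∀ x xs, xs ∈ A x → xs x = 0

/-- Symmetric linear relation: `gra A ⊆ gra A*`. -/
def SymOp (A : X → Set (Dl X)) : Prop := graphOf A ⊆ graphOf (adjointRel A)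

/-- At most single-valued. -/
def AtMostSingleValued (A : X → Set (Dl X)) : Prop := ∀ x, (A x).Subsingleton

/-- The symmetric part `A₊ = ½A + ½A*` (pointwise). -/
def symPart (A : X → Set (Dl X)) : X → Set (Dl X) :=
  fun x => (2 : ℝ)⁻¹ • A x + (2 : ℝ)⁻¹ • adjointRel A x

/-- The skew part `A∘ = ½A − ½A*` (pointwise). -/
def skewPart (A : X → Set (Dl X)) : X → Set (Dl X) :=
  fun x => (2 : ℝ)⁻¹ • A x - (2 : ℝ)⁻¹ • adjointRel A x

/-- Proper extended-real-valued function. -/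
def ProperFun (f : X → EReal) : Prop := (∀ x, f x ≠ ⊥) ∧ ∃ x, f x ≠ ⊤

/-- Convex extended-real-valued function. -/
def ConvexFun (f : X → EReal) : Prop :=
  ∀ x y, ∀ a b : ℝ, 0 ≤ a → 0 ≤ b → a + b = 1 →
    f (a • x + b • y) ≤ (a : EReal) * f x + (b : EReal) * f y

/-- The subdifferential of an extended-real-valued function. -/
def subdiff (f : X → EReal) : X → Set (Dl X) :=
  fun x => {xs | ∀ y, (xs (y - x) : EReal) + f x ≤ f y}

/-- Borwein–Wiersma decomposability. -/
def BWDecomposable (A : X → Set (Dl X)) : Prop :=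
  ∃ (f : X → EReal) (S : X → Set (Dl X)),
    ProperFun f ∧ LowerSemicontinuous f ∧ ConvexFun f ∧
    IsLinearRelation S ∧ SkewOp S ∧ AtMostSingleValued S ∧
    ∀ x, A x = subdiff f x + S x

/-- The quadratic function `q_A` associated with a monotone linear relation:
`q_A x = ½⟨x, x*⟩` for any `x* ∈ Ax` (`+∞` if `Ax = ∅`). -/
def qA (A : X → Set (Dl X)) : X → EReal :=
  fun x => sInf {v : EReal | ∃ xs ∈ A x, v = (((2 : ℝ)⁻¹ * xs x : ℝ) : EReal)}

/-- The lower semicontinuous hull: the largest lsc function majorized by `f`. -/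
def lscHull (f : X → EReal) : X → EReal :=
  fun x => sSup {v : EReal | ∃ g : X → EReal,
    LowerSemicontinuous g ∧ (∀ y, g y ≤ f y) ∧ v = g x}

/-- The Fenchel conjugate. -/
def fenchel (f : X → EReal) : Dl X → EReal :=
  fun xs => ⨆ x, ((xs x : EReal) - f x)

/-- Indicator function (values in `(-∞, +∞]`). -/
def indFun (C : Set X) : X → EReal := fun x => if x ∈ C then 0 else ⊤

/-- `S` is a single-valued linear selection of the set-valued operator `B`. -/
def IsLinearSelection (S B : X → Set (Dl X)) : Prop :=
  IsLinearRelation S ∧ AtMostSingleValued S ∧ domOf S = domOf B ∧ ∀ x, S x ⊆ B x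

/-- Irreducible (acyclic) operator in the sense of Asplund. -/
def IrreducibleOp (A : X → Set (Dl X)) : Prop :=
  ∀ (f : X → EReal) (S : X → Set (Dl X)),
    ProperFun f → LowerSemicontinuous f → ConvexFun f → MonotoneOp S →
    (∀ x, A x = subdiff f x + S x) →
    ∃ p : Dl X, (⋃ x ∈ domOf A, subdiff f x) = {p}

/-- Asplund decomposability. -/
def AsplundDecomposable (A : X → Set (Dl X)) : Prop :=
  ∃ (f : X → EReal) (S : X → Set (Dl X)),
    ProperFun f ∧ LowerSemicontinuous f ∧ ConvexFun f ∧
    IrreducibleOp S ∧ ∀ x, A x = subdiff f x + S x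

/-- Reflexivity of a real normed space. -/
def ReflexiveReal (X : Type*) [NormedAddCommGroup X] [NormedSpace ℝ X] : Prop :=
  Function.Surjective (NormedSpace.inclusionInDoubleDual ℝ X)


lemma aux_const_of_sq (ψ : ℝ → ℝ) (C : ℝ)
    (h : ∀ s t : ℝ, -(C * (t - s)^2) ≤ ψ t - ψ s) : ∀ s t : ℝ, ψ s = ψ t := by
  have habs : ∀ s t : ℝ, |ψ t - ψ s| ≤ C * (t - s)^2 := by
    intro s t
    rw [abs_le]
    constructor
    · nlinarith [h s t]
    · nlinarith [h t s]
  have key : ∀ n : ℕ, ∀ s t : ℝ, |ψ t - ψ s| ≤ C * (t - s)^2 / 2 ^ n := by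
    intro n
    induction n with
    | zero => simpa using habs
    | succ n ih =>
      intro s t
      have h1 := ih s ((s + t) / 2)
      have h2 := ih ((s + t) / 2) t
      have htri : |ψ t - ψ s| ≤ |ψ t - ψ ((s + t) / 2)| + |ψ ((s + t) / 2) - ψ s| :=
        abs_sub_le _ _ _
      have e1 : C * ((s + t) / 2 - s)^2 / 2 ^ n = C * (t - s)^2 / 2 ^ (n+1) / 2 := by
        rw [pow_succ]; ring
      have e2 : C * (t - (s + t) / 2)^2 / 2 ^ n = C * (t - s)^2 / 2 ^ (n+1) / 2 := by
        rw [pow_succ]; ring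
      rw [e1] at h1; rw [e2] at h2
      linarith
  intro s t
  by_contra hne
  have hd : 0 < |ψ t - ψ s| := abs_pos.mpr (sub_ne_zero.mpr fun e => hne e.symm)
  obtain ⟨n, hn⟩ := pow_unbounded_of_one_lt (C * (t - s)^2 / |ψ t - ψ s|) (one_lt_two (α := ℝ))
  have hp : (0:ℝ) < 2 ^ n := by positivity
  rw [div_lt_iff₀ hd] at hn
  have hlt : C * (t - s)^2 / 2 ^ n < |ψ t - ψ s| := by
    rw [div_lt_iff₀ hp]; linarith [mul_comm (|ψ t - ψ s|) ((2:ℝ) ^ n)]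
  linarith [key n s t]

lemma quad_sym (F : ℝ → ℝ → ℝ) (α β γ γ' : ℝ)
    (h : ∀ c d c' d' : ℝ,
      (c' - c) * (c * α + d * γ) + (d' - d) * (c * γ' + d * β) + F c d ≤ F c' d') :
    γ = γ' := by
  have ht : ∀ c d : ℝ, F c d = F c 0 + c * γ' * d + β * d^2 / 2 := by
    intro c d
    have hineq : ∀ s t : ℝ, -((β/2) * (t - s)^2) ≤
        (fun t => F c t - c * γ' * t - β * t^2 / 2) t -
        (fun t => F c t - c * γ' * t - β * t^2 / 2) s := by
      intro s t
      have := h c s c t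
      simp only
      nlinarith
    have hc := aux_const_of_sq _ (β/2) hineq 0 d
    nlinarith [hc]
  have hs : ∀ c d : ℝ, F c d = F 0 d + d * γ * c + α * c^2 / 2 := by
    intro c d
    have hineq : ∀ s t : ℝ, -((α/2) * (t - s)^2) ≤
        (fun t => F t d - d * γ * t - α * t^2 / 2) t -
        (fun t => F t d - d * γ * t - α * t^2 / 2) s := by
      intro s t
      have := h s d t d
      simp only
      nlinarith
    have hc := aux_const_of_sq _ (α/2) hineq 0 c
    nlinarith [hc]
  have e1 := ht 1 1
  have e2 := hs 1 0
  have e3 := hs 1 1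
  have e4 := ht 0 1
  linarith

/-- If a maximal monotone linear relation `A` is Borwein–Wiersma
decomposable, then `dom A ⊆ dom A*`. -/
theorem bw_decomposable_dom_subset_dom_adjoint
    [CompleteSpace X] (hrefl : ReflexiveReal X)
    (A : X → Set (Dl X)) (hlin : IsLinearRelation A) (hmax : MaxMonotoneOp A)
    (hbw : BWDecomposable A) :
    domOf A ⊆ domOf (adjointRel A) := by
  obtain ⟨f, S, hfp, hflsc, hfconv, hSlin, hSskew, hSsv, hAeq⟩ := hbw
  intro x hx
  obtain ⟨xs₀, hxs₀⟩ := hx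
  have hxs₀' : xs₀ ∈ subdiff f x + S x := by rw [← hAeq]; exact hxs₀
  rw [Set.mem_add] at hxs₀'
  obtain ⟨u, hu, sx, hsx, husx⟩ := hxs₀'
  have hux : u + sx ∈ A x := by rw [husx]; exact hxs₀
  refine ⟨u - sx, ?_⟩
  intro a as has
  have has' : as ∈ subdiff f a + S a := by rw [← hAeq]; exact has
  rw [Set.mem_add] at has'
  obtain ⟨v, hv, r, hr, hvr⟩ := has'
  have hva : v + r ∈ A a := by rw [hvr]; exact has
  -- skewness gives sx a + r x = 0
  have hskew : sx a + r x = 0 := by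
    have h1 : sx + r ∈ S (x + a) := hSlin.2.1 x sx a r hsx hr
    have h2 := hSskew _ _ h1
    have h3 := hSskew _ _ hsx
    have h4 := hSskew _ _ hr
    simp only [ContinuousLinearMap.add_apply, map_add] at h2
    linarith
  -- key: linear combinations of the subgradient pairs stay in the subdifferential graph
  have hkey : ∀ c d : ℝ, c • u + d • v ∈ subdiff f (c • x + d • a) := by
    intro c d
    have hA1 : c • (u + sx) + d • (v + r) ∈ A (c • x + d • a) :=
      hlin.2.1 _ _ _ _ (hlin.2.2 c x _ hux) (hlin.2.2 d a _ hva)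
    have hS1 : c • sx + d • r ∈ S (c • x + d • a) :=
      hSlin.2.1 _ _ _ _ (hSlin.2.2 c x _ hsx) (hSlin.2.2 d a _ hr)
    have hA1' : c • (u + sx) + d • (v + r) ∈ subdiff f (c • x + d • a) + S (c • x + d • a) := by
      rw [← hAeq]; exact hA1
    rw [Set.mem_add] at hA1'
    obtain ⟨w, hw, σ, hσ, hwσ⟩ := hA1'
    have hσe : σ = c • sx + d • r := hSsv _ hσ hS1
    have hwe : w = c • u + d • v := by
      have h5 : w + (c • sx + d • r) = c • (u + sx) + d • (v + r) := by
        rw [← hσe]; exact hwσ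
      have h6 : w = c • (u + sx) + d • (v + r) - (c • sx + d • r) :=
        eq_sub_of_add_eq h5
      rw [h6]; module
    rwa [hwe] at hw
  have hkey' : ∀ c d : ℝ, ∀ y : X,
      ((((c • u + d • v) (y - (c • x + d • a)) : ℝ)) : EReal) + f (c • x + d • a) ≤ f y :=
    fun c d => hkey c d
  -- f is finite on the plane spanned by x, a
  obtain ⟨x₀, hx₀⟩ := hfp.2
  have hfin : ∀ c d : ℝ, f (c • x + d • a) = ((f (c • x + d • a)).toReal : EReal) := by
    intro c d
    have hsub := hkey' c d
    have hne_top : f (c • x + d • a) ≠ ⊤ := by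
      intro htop
      apply hx₀
      have h6 := hsub x₀
      rw [htop, EReal.coe_add_top] at h6
      exact top_le_iff.mp h6
    exact (EReal.coe_toReal hne_top (hfp.1 _)).symm
  set F : ℝ → ℝ → ℝ := fun c d => (f (c • x + d • a)).toReal with hF
  -- the fundamental real inequality
  have hmain : ∀ c d c' d' : ℝ,
      (c' - c) * (c * (u x) + d * (v x)) + (d' - d) * (c * (u a) + d * (v a)) + F c d ≤ F c' d' := by
    intro c d c' d'
    have hsub := hkey' c d (c' • x + d' • a)
    rw [hfin c d, hfin c' d'] at hsub
    have happ : ((c • u + d • v) ((c' • x + d' • a) - (c • x + d • a)) : ℝ)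
        = (c' - c) * (c * (u x) + d * (v x)) + (d' - d) * (c * (u a) + d * (v a)) := by
      have hz : (c' • x + d' • a) - (c • x + d • a) = (c' - c) • x + (d' - d) • a := by
        module
      rw [hz]
      simp [ContinuousLinearMap.add_apply]
      ring
    rw [happ] at hsub
    rw [← EReal.coe_add, EReal.coe_le_coe_iff] at hsub
    exact hsub
  have hsym : v x = u a := quad_sym F (u x) (v a) (v x) (u a) hmain
  -- conclude
  rw [← hvr]
  simp only [ContinuousLinearMap.sub_apply, ContinuousLinearMap.add_apply]
  linarith

end
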